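/- Let F_n denote the Fibonacci numbers (F_0 = 0, F_1 = 1, F_n = F_{n−1} + F_{n−2}), let k ≥ 3, z = F_{k−1} and N = F_k. Then gcd(z, N) = 1, and for any z' ∈ ℤ with z z' ≡ 1 (mod N): ∑_{m,ℓ=1}^{N−1} B₁(m/N) B₂(((z(m−ℓ)) mod N)/N) B₁(ℓ/N) = ∑_{m,ℓ=1}^{N−1} B₁(m/N) B₂(((z'(m−ℓ)) mod N)/N) B₁(ℓ/N). -/

import Mathlib

/-!
Cassini's identity gives `F_{k-1}² ≡ (-1)^k (mod F_k)`, so `F_{k-1}` is its own inverse up to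
sign and every inverse `z'` satisfies `z' ≡ ±F_{k-1}`. The summands then agree term by term,
because `B₂(1 - t) = B₂(t)` makes `B₂((x mod N)/N)` invariant under `x ↦ -x`.
-/

/-- `B₁(t) = t − 1/2`, the Bernoulli polynomial of degree 1. -/
noncomputable def bern1 (t : ℝ) : ℝ := t - 1 / 2

/-- `B₂(t) = t² − t + 1/6`, the Bernoulli polynomial of degree 2. -/
noncomputable def bern2 (t : ℝ) : ℝ := t ^ 2 - t + 1 / 6

theorem bern2_one_sub (t : ℝ) : bern2 (1 - t) = bern2 t := by
  unfold bern2; ring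

theorem bern2_neg_emod_div (N : ℕ) (x : ℤ) :
    bern2 (((-x % N : ℤ) : ℝ) / N) = bern2 (((x % N : ℤ) : ℝ) / N) := by
  rcases N.eq_zero_or_pos with rfl | hN
  · simp
  rw [Int.neg_emod, Int.natAbs_natCast]
  split_ifs with hdvd
  · rw [Int.emod_eq_zero_of_dvd hdvd]
  · rw [Int.cast_sub, Int.cast_natCast, sub_div, div_self (by positivity), bern2_one_sub]

theorem bern2_emod_div_congr {N : ℕ} {a b : ℤ} (h : a ≡ b [ZMOD N] ∨ a ≡ -b [ZMOD N]) :
    bern2 (((a % N : ℤ) : ℝ) / N) = bern2 (((b % N : ℤ) : ℝ) / N) := by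
  rcases h with h | h
  · rw [h.eq]
  · rw [h.eq, bern2_neg_emod_div]

theorem Int.ModEq.eq_mul_of_mul_modEq_one {n z z' u : ℤ} (hu : u * u = 1)
    (hsq : z * z ≡ u [ZMOD n]) (hinv : z * z' ≡ 1 [ZMOD n]) : z' ≡ u * z [ZMOD n] :=
  calc z' = u * u * z' := by rw [hu, one_mul]
    _ ≡ u * (z * z) * z' [ZMOD n] := (hsq.symm.mul_left u).mul_right z'
    _ = u * z * (z * z') := by ring
    _ ≡ u * z * 1 [ZMOD n] := hinv.mul_left _
    _ = u * z := mul_one _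

theorem Nat.fib_sq_modEq_fib_succ (n : ℕ) :
    (Nat.fib n : ℤ) * Nat.fib n ≡ (-1) ^ (n + 1) [ZMOD Nat.fib (n + 1)] := by
  have cassini := Int.fib_succ_mul_fib_pred_sub_fib_sq n
  rw [Int.natAbs_natCast, ← Nat.cast_succ, Int.fib_natCast, Int.fib_natCast] at cassini
  refine (Int.modEq_iff_dvd.mpr ⟨Int.fib (n - 1), ?_⟩).symm
  linear_combination -cassini

/-- For Fibonacci numbers, `k ≥ 3`, `z = F_{k−1}` and `N = F_k`:
`gcd(z, N) = 1`, and for any `z'` with `zz' ≡ 1 (mod N)` the mixture sums for `z` and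
`z'` coincide:
`∑_{m,ℓ=1}^{N−1} B₁(m/N) B₂(((z(m−ℓ)) mod N)/N) B₁(ℓ/N)
  = ∑_{m,ℓ=1}^{N−1} B₁(m/N) B₂(((z'(m−ℓ)) mod N)/N) B₁(ℓ/N)`. -/
theorem stmt17 (k : ℕ) (hk : 3 ≤ k) :
    Nat.gcd (Nat.fib (k - 1)) (Nat.fib k) = 1 ∧
    ∀ z' : ℤ, (Nat.fib (k - 1) : ℤ) * z' ≡ 1 [ZMOD (Nat.fib k : ℤ)] →
      ∑ m ∈ Finset.Icc 1 (Nat.fib k - 1), ∑ l ∈ Finset.Icc 1 (Nat.fib k - 1),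
          bern1 ((m : ℝ) / (Nat.fib k)) *
            bern2 (((((Nat.fib (k - 1) : ℤ) * ((m : ℤ) - (l : ℤ))) % (Nat.fib k : ℤ) : ℤ) : ℝ)
              / (Nat.fib k)) *
            bern1 ((l : ℝ) / (Nat.fib k))
        = ∑ m ∈ Finset.Icc 1 (Nat.fib k - 1), ∑ l ∈ Finset.Icc 1 (Nat.fib k - 1),
            bern1 ((m : ℝ) / (Nat.fib k)) *
              bern2 ((((z' * ((m : ℤ) - (l : ℤ))) % (Nat.fib k : ℤ) : ℤ) : ℝ) / (Nat.fib k)) *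
              bern1 ((l : ℝ) / (Nat.fib k)) := by
  obtain ⟨n, rfl⟩ : ∃ n, k = n + 1 := ⟨k - 1, by omega⟩
  rw [Nat.add_sub_cancel]
  refine ⟨Nat.fib_coprime_fib_succ n, fun z' hz' => ?_⟩
  have hz'_eq : z' ≡ (-1) ^ (n + 1) * Nat.fib n [ZMOD Nat.fib (n + 1)] :=
    .eq_mul_of_mul_modEq_one (by rw [← pow_add, ← two_mul, pow_mul]; norm_num)
      (Nat.fib_sq_modEq_fib_succ n) hz'
  refine Finset.sum_congr rfl fun m _ => Finset.sum_congr rfl fun l _ => ?_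
  rw [bern2_emod_div_congr (a := z' * _)]
  rcases neg_one_pow_eq_or ℤ (n + 1) with h | h <;> rw [h] at hz'_eq
  · exact .inl (by simpa using hz'_eq.mul_right ((m : ℤ) - l))
  · exact .inr (by simpa using hz'_eq.mul_right ((m : ℤ) - l))
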